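/- Let k be odd and n = 2k. Then msum(2k, k) = 1/2; i.e., there is a permutation of {1,...,2k} all of whose cyclic k-consecutive sums are at most k(2k+1)/2 + 1/2, and every permutation has some cyclic k-consecutive sum at least k(2k+1)/2 + 1/2. -/
import Mathlib


/-- The cyclic `k`-consecutive sum of the permutation `π` of `{1,…,n}`
(realized as `Equiv.Perm (Fin n)` with values `π i + 1 ∈ {1,…,n}`) starting at position `i`. -/
def ksum (n k : ℕ) (π : Equiv.Perm (Fin n)) (i : ℕ) : ℕ :=
  ∑ j ∈ Finset.range k,
    if h : (i + j) % n < n then ((π ⟨(i + j) % n, h⟩ : ℕ) + 1) else 0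

/-- The maximal cyclic `k`-consecutive sum of `π`. -/
def maxksum (n k : ℕ) (π : Equiv.Perm (Fin n)) : ℕ :=
  Finset.sup (Finset.range n) (ksum n k π)

/-- `msum n k` : minimum over permutations of `max_i s_i - k(n+1)/2`. -/
noncomputable def msum (n k : ℕ) : ℚ :=
  Finset.inf' (Finset.univ : Finset (Equiv.Perm (Fin n))) ⟨1, Finset.mem_univ 1⟩
    (fun π => (maxksum n k π : ℚ) - (k : ℚ) * ((n : ℚ) + 1) / 2)

/-- `disc n k` : minimum over permutations of `max_i |s_i - k(n+1)/2|`
(computed as `max_i |2 s_i - k(n+1)| / 2`). -/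
noncomputable def disc (n k : ℕ) : ℚ :=
  Finset.inf' (Finset.univ : Finset (Equiv.Perm (Fin n))) ⟨1, Finset.mem_univ 1⟩
    (fun π => ((Finset.sup (Finset.range n)
        (fun i => ((2 * (ksum n k π i : ℤ)) - (k : ℤ) * ((n : ℤ) + 1)).natAbs) : ℕ) : ℚ) / 2)

lemma sum_shift (n : ℕ) (hn : 0 < n) (v : ℕ → ℕ) (j : ℕ) :
    ∑ i ∈ Finset.range n, v ((i + j) % n) = ∑ i ∈ Finset.range n, v i := by
  haveI : NeZero n := ⟨hn.ne'⟩
  rw [← Fin.sum_univ_eq_sum_range (fun i => v ((i + j) % n)),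
      ← Fin.sum_univ_eq_sum_range v]
  have := Equiv.sum_comp (Equiv.addRight (⟨j % n, Nat.mod_lt _ hn⟩ : Fin n))
    (fun i : Fin n => v i.val)
  rw [← this]
  refine Finset.sum_congr rfl fun i _ => ?_
  simp only [Equiv.coe_addRight]
  congr 1
  rw [Fin.add_def]
  exact (Nat.add_mod_mod _ _ _).symm

lemma total_sum (k : ℕ) (hk : 0 < k) (π : Equiv.Perm (Fin (2*k))) :
    ∑ i ∈ Finset.range (2*k), ksum (2*k) k π i = k * (k * (2*k+1)) := by
  have hn0 : 0 < 2*k := by omega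
  set v : ℕ → ℕ := fun m => if h : m < 2*k then ((π ⟨m, h⟩ : ℕ) + 1) else 0 with hv
  have hks : ∀ i, ksum (2*k) k π i = ∑ j ∈ Finset.range k, v ((i+j) % (2*k)) := by
    intro i; rfl
  have hone : ∑ i ∈ Finset.range (2*k), v i = k * (2*k+1) := by
    have h1 : ∑ i ∈ Finset.range (2*k), v i = ∑ m : Fin (2*k), ((π m : ℕ) + 1) := by
      rw [← Fin.sum_univ_eq_sum_range]
      refine Finset.sum_congr rfl fun i _ => ?_
      simp [hv, i.isLt]
    rw [h1, Equiv.sum_comp π (fun m : Fin (2*k) => (m : ℕ) + 1)]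
    rw [Fin.sum_univ_eq_sum_range (fun m => m + 1)]
    have h3 : (∑ i ∈ Finset.range (2*k), (i+1)) * 2 = (2*k+1) * (2*k) := by
      have hs : ∑ i ∈ Finset.range (2*k+1), (fun i => i) i
          = (∑ i ∈ Finset.range (2*k), ((fun i => i) (i+1))) + (fun i => i) 0 :=
        Finset.sum_range_succ' (fun i => i) (2*k)
      simp only [] at hs
      have hg := Finset.sum_range_id_mul_two (2*k+1)
      simp only [Nat.add_sub_cancel] at hg
      omega
    have e : (2*k+1)*(2*k) = 2*(k*(2*k+1)) := by ring
    omega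
  calc ∑ i ∈ Finset.range (2*k), ksum (2*k) k π i
      = ∑ i ∈ Finset.range (2*k), ∑ j ∈ Finset.range k, v ((i+j) % (2*k)) :=
        Finset.sum_congr rfl fun i _ => hks i
    _ = ∑ j ∈ Finset.range k, ∑ i ∈ Finset.range (2*k), v ((i+j) % (2*k)) := Finset.sum_comm
    _ = ∑ j ∈ Finset.range k, ∑ i ∈ Finset.range (2*k), v i :=
        Finset.sum_congr rfl fun j _ => sum_shift (2*k) hn0 v j
    _ = k * (k * (2*k+1)) := by rw [Finset.sum_const, hone]; simp [mul_comm]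

lemma lower (k : ℕ) (hk : Odd k) (π : Equiv.Perm (Fin (2*k))) :
    k * (2*k+1) + 1 ≤ 2 * maxksum (2*k) k π := by
  have hk0 : 0 < k := hk.pos
  have htot := total_sum k hk0 π
  have hle : ∑ i ∈ Finset.range (2*k), ksum (2*k) k π i ≤ (2*k) * maxksum (2*k) k π := by
    have := Finset.sum_le_card_nsmul (Finset.range (2*k)) (ksum (2*k) k π)
      (maxksum (2*k) k π) (fun i hi => Finset.le_sup hi)
    simpa [smul_eq_mul] using this
  have h1 : k * (k * (2*k+1)) ≤ k * (2 * maxksum (2*k) k π) := by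
    calc k * (k * (2*k+1)) ≤ (2*k) * maxksum (2*k) k π := htot ▸ hle
    _ = k * (2 * maxksum (2*k) k π) := by ring
  have h2 : k * (2*k+1) ≤ 2 * maxksum (2*k) k π := Nat.le_of_mul_le_mul_left h1 hk0
  have hodd : Odd (k * (2*k+1)) := hk.mul ⟨k, by ring⟩
  obtain ⟨t, ht⟩ := hodd
  omega

/-- value (0-indexed) at position `x` of the optimal permutation. -/
def fval (k x : ℕ) : ℕ := 2 * (x % k) + (x % k + x / k) % 2

lemma fval_lt (k x : ℕ) (hk : 0 < k) (hx : x < 2*k) : fval k x < 2*k := by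
  have h1 : x % k < k := Nat.mod_lt _ hk
  have h2 : (x % k + x / k) % 2 < 2 := Nat.mod_lt _ (by norm_num)
  unfold fval; omega

lemma fval_inj (k : ℕ) (hk : 0 < k) {x y : ℕ} (hx : x < 2*k) (hy : y < 2*k)
    (h : fval k x = fval k y) : x = y := by
  have hxk : x % k < k := Nat.mod_lt _ hk
  have hyk : y % k < k := Nat.mod_lt _ hk
  have hxd : x / k < 2 := Nat.div_lt_of_lt_mul (by omega)
  have hyd : y / k < 2 := Nat.div_lt_of_lt_mul (by omega)
  have hxe : k * (x / k) + x % k = x := Nat.div_add_mod x k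
  have hye : k * (y / k) + y % k = y := Nat.div_add_mod y k
  unfold fval at h
  obtain ⟨rx, hrx⟩ : ∃ r, x % k = r := ⟨_, rfl⟩
  obtain ⟨qx, hqx⟩ : ∃ q, x / k = q := ⟨_, rfl⟩
  obtain ⟨ry, hry⟩ : ∃ r, y % k = r := ⟨_, rfl⟩
  obtain ⟨qy, hqy⟩ : ∃ q, y / k = q := ⟨_, rfl⟩
  simp only [hrx, hqx, hry, hqy] at h hxk hyk hxd hyd hxe hye
  have hr : rx = ry := by clear hxe hye; omega
  have hq : qx = qy := by clear hxe hye; omega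
  rw [hq, hr] at hxe
  omega

/-- value at position with wraparound, 1-indexed -/
def gfun (k m : ℕ) : ℕ := fval k (m % (2*k)) + 1

lemma gstep (k : ℕ) (hk : Odd k) (i : ℕ) :
    (i % 2 = 0 → gfun k (i+k) = gfun k i + 1) ∧
    (i % 2 = 1 → gfun k i = gfun k (i+k) + 1) := by
  have hk0 : 0 < k := hk.pos
  have hk2 : k % 2 = 1 := Nat.odd_iff.mp hk
  have hx : i % (2*k) < 2*k := Nat.mod_lt _ (by omega)
  have hp : i % (2*k) % 2 = i % 2 := Nat.mod_mod_of_dvd i ⟨k, rfl⟩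
  have hik : (i+k) % (2*k) = (i % (2*k) + k) % (2*k) := by
    conv_lhs => rw [Nat.add_mod]
    rw [Nat.mod_eq_of_lt (show k < 2*k by omega)]
  unfold gfun fval
  rw [hik]
  set x := i % (2*k) with hxdef
  rcases lt_or_ge x k with hcase | hcase
  · rw [Nat.mod_eq_of_lt (show x + k < 2*k by omega), Nat.add_mod_right,
      Nat.add_div_right _ hk0, Nat.mod_eq_of_lt hcase, Nat.div_eq_of_lt hcase]
    omega
  · have h1 : (x + k) % (2*k) = x - k := by
      rw [Nat.mod_eq_sub_mod (by omega : 2*k ≤ x+k)]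
      have e : x + k - 2*k = x - k := by omega
      rw [e]; exact Nat.mod_eq_of_lt (by omega)
    have h2 : x % k = x - k := by
      rw [Nat.mod_eq_sub_mod hcase]; exact Nat.mod_eq_of_lt (by omega)
    have h3 : x / k = 1 := by
      have h4 : x / k < 2 := Nat.div_lt_of_lt_mul (by omega)
      have h5 : 1 ≤ x / k := (Nat.one_le_div_iff hk0).mpr hcase
      omega
    rw [h1, h2, h3, Nat.mod_eq_of_lt (show x - k < k by omega),
      Nat.div_eq_of_lt (show x - k < k by omega)]
    omega

noncomputable def optperm (k : ℕ) (hk : 0 < k) : Equiv.Perm (Fin (2*k)) :=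
  Equiv.ofBijective (fun i => ⟨fval k i, fval_lt k i hk i.isLt⟩)
    (Finite.injective_iff_bijective.mp (fun a b hab =>
      Fin.ext (fval_inj k hk a.isLt b.isLt (congrArg Fin.val hab))))

lemma ksum_opt (k : ℕ) (hk0 : 0 < k) (i : ℕ) :
    ksum (2*k) k (optperm k hk0) i = ∑ j ∈ Finset.range k, gfun k (i+j) := by
  unfold ksum
  refine Finset.sum_congr rfl fun j _ => ?_
  rw [dif_pos (Nat.mod_lt _ (by omega : 0 < 2*k))]
  rfl

lemma sum_mod2 (m : ℕ) : ∑ j ∈ Finset.range m, j % 2 = m / 2 := by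
  induction m with
  | zero => simp
  | succ m ih => rw [Finset.sum_range_succ, ih]; omega

lemma ksum_formula (k : ℕ) (hk : Odd k) (i : ℕ) :
    2 * ksum (2*k) k (optperm k hk.pos) i = 2*(k*k) + k - 1 + 2*(i % 2) := by
  induction i with
  | zero =>
    rw [ksum_opt]
    have hterm : ∀ j ∈ Finset.range k, gfun k (0+j) = 2*j + j%2 + 1 := by
      intro j hj
      have hj' : j < k := Finset.mem_range.mp hj
      unfold gfun fval
      rw [zero_add, Nat.mod_eq_of_lt (show j < 2*k by omega),
        Nat.mod_eq_of_lt hj', Nat.div_eq_of_lt hj']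
      omega
    rw [Finset.sum_congr rfl hterm]
    have hsplit : ∑ j ∈ Finset.range k, (2*j + j%2 + 1)
        = 2 * (∑ j ∈ Finset.range k, j) + (∑ j ∈ Finset.range k, j % 2) + k := by
      rw [Finset.sum_add_distrib, Finset.sum_add_distrib, ← Finset.mul_sum]
      simp
    have hg := Finset.sum_range_id_mul_two k
    have hm2 := sum_mod2 k
    obtain ⟨m, hm⟩ := hk
    subst hm
    have e1 : (2*m+1) * (2*m+1-1) = 4*(m*m) + 2*m := by
      have e : 2*m+1-1 = 2*m := by omega
      rw [e]; ring
    have e2 : 2*((2*m+1)*(2*m+1)) = 8*(m*m) + 8*m + 2 := by ring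
    omega
  | succ i ih =>
    have hrec : ksum (2*k) k (optperm k hk.pos) i + gfun k (i+k)
        = ksum (2*k) k (optperm k hk.pos) (i+1) + gfun k i := by
      rw [ksum_opt, ksum_opt]
      have h1 := Finset.sum_range_succ (fun j => gfun k (i+j)) k
      have h2 := Finset.sum_range_succ' (fun j => gfun k (i+j)) k
      simp only [Nat.add_zero] at h1 h2
      have h3 : ∑ j ∈ Finset.range k, gfun k (i+(j+1))
          = ∑ j ∈ Finset.range k, gfun k ((i+1)+j) :=
        Finset.sum_congr rfl (fun j _ => by rw [show i+(j+1) = (i+1)+j by ring])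
      omega
    obtain ⟨he, ho⟩ := gstep k hk i
    rcases Nat.mod_two_eq_zero_or_one i with h2 | h2
    · have := he h2; omega
    · have := ho h2; omega

lemma maxksum_opt (k : ℕ) (hk : Odd k) :
    2 * maxksum (2*k) k (optperm k hk.pos) = 2*(k*k) + k + 1 := by
  have hk0 : 0 < k := hk.pos
  have hk2 : k % 2 = 1 := Nat.odd_iff.mp hk
  have heq : maxksum (2*k) k (optperm k hk.pos) = k*k + (k+1)/2 := by
    apply le_antisymm
    · apply Finset.sup_le
      intro i _
      have := ksum_formula k hk i
      omega
    · have hmem : (1 : ℕ) ∈ Finset.range (2*k) := Finset.mem_range.mpr (by omega)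
      have h1 := ksum_formula k hk 1
      calc k*k + (k+1)/2 ≤ ksum (2*k) k (optperm k hk.pos) 1 := by omega
        _ ≤ maxksum (2*k) k (optperm k hk.pos) := Finset.le_sup hmem
  omega

theorem stmt18 (k : ℕ) (hk : Odd k) : msum (2 * k) k = 1 / 2 := by
  have hk0 : 0 < k := hk.pos
  unfold msum
  apply le_antisymm
  · have hle := Finset.inf'_le
      (f := fun π : Equiv.Perm (Fin (2*k)) => (maxksum (2*k) k π : ℚ) - (k : ℚ) * (((2*k : ℕ) : ℚ) + 1) / 2)
      (s := (Finset.univ : Finset (Equiv.Perm (Fin (2*k)))))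
      (Finset.mem_univ (optperm k hk0))
    refine le_trans hle ?_
    have hm : ((2 * maxksum (2*k) k (optperm k hk.pos) : ℕ) : ℚ)
        = ((2*(k*k) + k + 1 : ℕ) : ℚ) := by rw [maxksum_opt k hk]
    push_cast at hm
    have hpe : optperm k hk0 = optperm k hk.pos := rfl
    rw [hpe]
    push_cast
    linarith [hm]
  · apply Finset.le_inf'
    intro π _
    have h := lower k hk π
    have hc : ((k * (2*k+1) + 1 : ℕ) : ℚ) ≤ ((2 * maxksum (2*k) k π : ℕ) : ℚ) := by
      exact_mod_cast h
    push_cast at hc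
    push_cast
    nlinarith [hc]
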